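/- Let (Ω, F, P) be a standard Borel probability space, let X₁ : Ω → ℝ^d be integrable, let X₂ : Ω → S be measurable, and let Y : Ω → Fin k be measurable with P(Y = y) > 0 for every y. If X₁ and X₂ are conditionally independent given σ(Y), then almost surely E[X₁ | σ(X₂)] = Σ_{y ∈ Fin k} E[1_{Y = y} | σ(X₂)] · μ_y, where μ_y := E[X₁ · 1_{Y = y}] / P(Y = y) is the class-conditional mean. That is, the optimal reconstruction-based representation of X₂ is a fixed linear function (with coefficient vectors μ_y) of the posterior class probabilities E[1_{Y = y} | σ(X₂)]. -/

import Mathlib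

/-!
The fibres `{Y = y}` are atoms of `σ(Y)`, so a `σ(Y)`-conditional expectation is constant on each
of them, equal to the corresponding mean under the conditional measure `μ[|Y ← y]`. Hence
conditional independence given `σ(Y)` is independence of `X₁` and `X₂` under every `μ[|Y ← y]`.
For `s ∈ σ(X₂)`, the law of total probability and this independence give
`∫_s X₁ = ∑ y, μ (s ∩ {Y = y}) • 𝔼[X₁ | Y = y]`, and `μ (s ∩ {Y = y})` is the integral over `s`
of the posterior `μ⟦Y = y | σ(X₂)⟧`: this is the defining property of `μ[X₁ | σ(X₂)]`.
-/

open MeasureTheory ProbabilityTheory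

namespace ProbabilityTheory

variable {Ω E : Type*} {mΩ : MeasurableSpace Ω} {μ : Measure Ω}
  [NormedAddCommGroup E] [NormedSpace ℝ E]

theorem integral_cond_eq_inv_smul_setIntegral (f : Ω → E) (s : Set Ω) :
    ∫ ω, f ω ∂μ[|s] = (μ.real s)⁻¹ • ∫ ω in s, f ω ∂μ := by
  rw [ProbabilityTheory.cond, integral_smul_measure, ENNReal.toReal_inv, measureReal_def]

theorem integral_eq_sum_measureReal_smul_integral_cond {α : Type*} [Fintype α]
    [MeasurableSpace α] [DiscreteMeasurableSpace α] [IsFiniteMeasure μ]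
    {Y : Ω → α} (hY : Measurable Y) {f : Ω → E} (hf : Integrable f μ) :
    ∫ ω, f ω ∂μ = ∑ y, μ.real (Y ⁻¹' {y}) • ∫ ω, f ω ∂μ[|Y ← y] := by
  have hle : ∀ y, μ (Y ⁻¹' {y}) • μ[|Y ← y] ≤ μ := fun y => by
    conv_rhs => rw [← sum_meas_smul_cond_fiber hY μ]
    exact Finset.single_le_sum (f := fun y => μ (Y ⁻¹' {y}) • μ[|Y ← y])
      (fun _ _ => Measure.zero_le _) (Finset.mem_univ y)
  conv_lhs => rw [← sum_meas_smul_cond_fiber hY μ]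
  rw [integral_finsetSum_measure fun y _ => hf.mono_measure (hle y)]
  simp_rw [integral_smul_measure, measureReal_def]

theorem cond_real_mul_eq_inter [IsFiniteMeasure μ] {s : Set Ω} (hs : MeasurableSet s)
    (t : Set Ω) :
    μ[|s].real t * μ.real s = μ.real (s ∩ t) := by
  rw [measureReal_def, measureReal_def, measureReal_def, ← ENNReal.toReal_mul,
    cond_mul_eq_inter hs]

theorem condExp_comap_ae_eq_integral_cond [CompleteSpace E] [IsFiniteMeasure μ]
    {β : Type*} [MeasurableSpace β] [MeasurableSingletonClass β] {Y : Ω → β}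
    (hY : Measurable Y) {f : Ω → E} (hf : Integrable f μ) (y : β) :
    μ[f | MeasurableSpace.comap Y inferInstance]
      =ᵐ[μ.restrict (Y ⁻¹' {y})] fun _ => ∫ ω, f ω ∂μ[|Y ← y] := by
  obtain ⟨h, -, hh⟩ := (stronglyMeasurable_condExp (m := MeasurableSpace.comap Y inferInstance)
    (μ := μ) (f := f)).exists_eq_measurable_comp
  have hA : MeasurableSet (Y ⁻¹' {y}) := hY (measurableSet_singleton y)
  have hconst : ∀ ω ∈ Y ⁻¹' {y}, μ[f | MeasurableSpace.comap Y inferInstance] ω = h y := by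
    rintro ω rfl
    rw [hh]; rfl
  rcases eq_or_ne (μ (Y ⁻¹' {y})) 0 with hμA | hμA
  · rw [Measure.restrict_eq_zero.2 hμA]
    simp [Filter.EventuallyEq]
  have hmean : μ.real (Y ⁻¹' {y}) • h y = ∫ ω in Y ⁻¹' {y}, f ω ∂μ := by
    rw [← setIntegral_condExp hY.comap_le hf ⟨{y}, measurableSet_singleton y, rfl⟩,
      setIntegral_congr_fun hA hconst, setIntegral_const]
  filter_upwards [ae_restrict_mem hA] with ω hω
  rw [hconst ω hω, integral_cond_eq_inv_smul_setIntegral, ← hmean, inv_smul_smul₀]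
  exact (measureReal_ne_zero_iff (measure_ne_top _ _)).2 hμA

theorem CondIndepFun.congr_left [StandardBorelSpace Ω] [IsFiniteMeasure μ]
    {m' : MeasurableSpace Ω} {hm' : m' ≤ mΩ} {β γ : Type*} [MeasurableSpace β]
    [MeasurableSpace γ] {f f' : Ω → β} {g : Ω → γ}
    (h : CondIndepFun m' hm' f g μ) (hff' : f =ᵐ[μ] f') : CondIndepFun m' hm' f' g μ :=
  have hκ : ∀ᵐ ω ∂(@condExpKernel Ω mΩ _ μ _ m' ∘ₘ μ.trim hm'), f ω = f' ω := by
    rwa [@condExpKernel_comp_trim Ω m' mΩ _ μ _ hm']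
  Kernel.IndepFun.congr' h (Measure.ae_ae_of_ae_comp hκ) (ae_of_all _ fun _ => .rfl)

theorem CondIndepFun.indepFun_cond_preimage_singleton [StandardBorelSpace Ω] [IsFiniteMeasure μ]
    {β γ δ : Type*} [MeasurableSpace β] [MeasurableSingletonClass β] [MeasurableSpace γ]
    [MeasurableSpace δ] {Y : Ω → β} (hY : Measurable Y) {f : Ω → γ} {g : Ω → δ}
    (h : CondIndepFun (MeasurableSpace.comap Y inferInstance) hY.comap_le f g μ)
    (hf : Measurable f) (hg : Measurable g) (y : β) :
    IndepFun f g μ[|Y ← y] := by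
  rw [indepFun_iff_measure_inter_preimage_eq_mul]
  intro B C hB hC
  rcases eq_or_ne (μ (Y ⁻¹' {y})) 0 with hμA | hμA
  · simp [cond_eq_zero_of_meas_eq_zero hμA]
  have hfiber : ∀ t, MeasurableSet t →
      μ⟦t | MeasurableSpace.comap Y inferInstance⟧
        =ᵐ[μ.restrict (Y ⁻¹' {y})] fun _ => μ[|Y ← y].real t := fun t ht => by
    simpa only [← Pi.one_def, integral_indicator_one ht] using
      condExp_comap_ae_eq_integral_cond hY ((integrable_const (μ := μ) (1 : ℝ)).indicator ht) y
  have : (ae (μ.restrict (Y ⁻¹' {y}))).NeBot := ae_restrict_neBot.2 hμA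
  obtain ⟨ω, hω, h₁, h₂, h₁₂⟩ := (ae_restrict_of_ae
    ((condIndepFun_iff_condExp_inter_preimage_eq_mul hf hg).1 h B C hB hC) |>.and <|
    (hfiber _ (hf hB)).and <| (hfiber _ (hg hC)).and (hfiber _ ((hf hB).inter (hg hC)))).exists
  dsimp only at hω h₁ h₂ h₁₂
  rw [h₁, h₂, h₁₂, measureReal_def, measureReal_def, measureReal_def, ← ENNReal.toReal_mul] at hω
  exact (ENNReal.toReal_eq_toReal_iff' (measure_ne_top _ _) (by finiteness)).1 hω

theorem CondIndepFun.indepFun_cond_preimage_singleton₀ [StandardBorelSpace Ω] [IsFiniteMeasure μ]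
    {β γ δ : Type*} [MeasurableSpace β] [MeasurableSingletonClass β] [MeasurableSpace γ]
    [MeasurableSpace δ] {Y : Ω → β} (hY : Measurable Y) {f : Ω → γ} {g : Ω → δ}
    (h : CondIndepFun (MeasurableSpace.comap Y inferInstance) hY.comap_le f g μ)
    (hf : AEMeasurable f μ) (hg : Measurable g) (y : β) :
    IndepFun f g μ[|Y ← y] :=
  ((h.congr_left hf.ae_eq_mk).indepFun_cond_preimage_singleton hY hf.measurable_mk hg y).congr
    (cond_absolutelyContinuous hf.ae_eq_mk.symm) .rfl

theorem IndepFun.setIntegral_eq_measureReal_smul_integral [MeasurableSpace E] [BorelSpace E]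
    {γ : Type*} [MeasurableSpace γ] {f : Ω → E} {g : Ω → γ} (h : IndepFun f g μ)
    (hf : AEStronglyMeasurable f μ) (hg : Measurable g) {s : Set Ω}
    (hs : MeasurableSet[MeasurableSpace.comap g inferInstance] s) :
    ∫ ω in s, f ω ∂μ = μ.real s • ∫ ω, f ω ∂μ := by
  obtain ⟨B, hB, rfl⟩ := hs
  have hind : IndepFun ((g ⁻¹' B).indicator fun _ => (1 : ℝ)) f μ :=
    h.symm.comp (measurable_const.indicator hB) measurable_id
  have := hind.integral_fun_smul_eq_smul_integral
    (aestronglyMeasurable_const.indicator (hg hB)) hf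
  simp only [← Set.indicator_smul_apply_left, one_smul] at this
  rwa [integral_indicator (hg hB), ← Pi.one_def, integral_indicator_one (hg hB)] at this

end ProbabilityTheory

theorem condexp_eq_linear_in_posterior_general
    {Ω : Type*} {F : MeasurableSpace Ω} [StandardBorelSpace Ω]
    {μ : Measure Ω} [IsProbabilityMeasure μ]
    {d k : ℕ} {S : Type*} [MeasurableSpace S]
    (X₁ : Ω → EuclideanSpace ℝ (Fin d)) (hX₁ : Integrable X₁ μ)
    (X₂ : Ω → S) (hX₂ : Measurable X₂)
    (Y : Ω → Fin k) (hY : Measurable Y)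
    (hindep : CondIndepFun (MeasurableSpace.comap Y inferInstance)
      (hY.comap_le) X₁ X₂ μ) :
    μ[X₁ | MeasurableSpace.comap X₂ inferInstance]
      =ᵐ[μ] fun ω => ∑ y : Fin k,
        (condExp (MeasurableSpace.comap X₂ inferInstance) μ
            (Set.indicator (Y ⁻¹' {y}) fun _ => (1 : ℝ)) ω) •
          (((μ (Y ⁻¹' {y})).toReal)⁻¹ • ∫ ω', Set.indicator (Y ⁻¹' {y}) X₁ ω' ∂μ) := by
  have hm₂ : MeasurableSpace.comap X₂ inferInstance ≤ F := hX₂.comap_le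
  have hA (y : Fin k) : MeasurableSet (Y ⁻¹' {y}) := hY (measurableSet_singleton y)
  have hmean (y : Fin k) : ((μ (Y ⁻¹' {y})).toReal)⁻¹ • ∫ ω, (Y ⁻¹' {y}).indicator X₁ ω ∂μ
      = ∫ ω, X₁ ω ∂μ[|Y ← y] := by
    rw [integral_indicator (hA y), integral_cond_eq_inv_smul_setIntegral, measureReal_def]
  simp only [hmean]
  refine (ae_eq_condExp_of_forall_setIntegral_eq hm₂ hX₁ (fun s _ _ => ?_) (fun s hs _ => ?_)
    ?_).symm
  · exact (integrable_finsetSum _ fun y _ => integrable_condExp.smul_const _).integrableOn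
  · calc _ = ∑ y, μ.real (s ∩ Y ⁻¹' {y}) • ∫ ω, X₁ ω ∂μ[|Y ← y] := by
          rw [integral_finsetSum _ fun y _ => (integrable_condExp.smul_const _).integrableOn]
          refine Finset.sum_congr rfl fun y _ => ?_
          rw [integral_smul_const,
            setIntegral_condExp hm₂ ((integrable_const _).indicator (hA y)) hs,
            setIntegral_indicator (hA y), setIntegral_const, smul_eq_mul, mul_one]
      _ = ∑ y, μ.real (Y ⁻¹' {y}) • ∫ ω in s, X₁ ω ∂μ[|Y ← y] := by
          refine Finset.sum_congr rfl fun y _ => ?_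
          rw [((hindep.indepFun_cond_preimage_singleton₀ hY hX₁.aemeasurable hX₂ y)
            |>.setIntegral_eq_measureReal_smul_integral
              (hX₁.1.mono_ac cond_absolutelyContinuous) hX₂ hs), smul_smul, mul_comm,
            cond_real_mul_eq_inter (hA y), Set.inter_comm]
      _ = ∫ ω in s, X₁ ω ∂μ := by
          rw [← integral_indicator (hm₂ s hs),
            integral_eq_sum_measureReal_smul_integral_cond hY (hX₁.indicator (hm₂ s hs))]
          simp only [integral_indicator (hm₂ s hs)]
  · exact (Finset.stronglyMeasurable_fun_sum _ fun y _ =>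
      stronglyMeasurable_condExp.smul_const _).aestronglyMeasurable

/-- Structural core of Theorem 1: under conditional independence of the two views given
the label, the optimal reconstruction-based representation `E[X₁ | σ(X₂)]` is the fixed
linear combination `∑ y, E[1_{Y = y} | σ(X₂)] • μ_y` of the posterior class
probabilities, where `μ_y = E[X₁ · 1_{Y = y}] / P(Y = y)` is the class-conditional mean. -/
theorem condexp_eq_linear_in_posterior
    {Ω : Type*} {F : MeasurableSpace Ω} [StandardBorelSpace Ω]
    {μ : Measure Ω} [IsProbabilityMeasure μ]
    {d k : ℕ} {S : Type*} [MeasurableSpace S]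
    (X₁ : Ω → EuclideanSpace ℝ (Fin d)) (hX₁ : Integrable X₁ μ)
    (X₂ : Ω → S) (hX₂ : Measurable X₂)
    (Y : Ω → Fin k) (hY : Measurable Y)
    (hpos : ∀ y : Fin k, 0 < μ (Y ⁻¹' {y}))
    (hindep : CondIndepFun (MeasurableSpace.comap Y inferInstance)
      (hY.comap_le) X₁ X₂ μ) :
    μ[X₁ | MeasurableSpace.comap X₂ inferInstance]
      =ᵐ[μ] fun ω => ∑ y : Fin k,
        (condExp (MeasurableSpace.comap X₂ inferInstance) μ
            (Set.indicator (Y ⁻¹' {y}) fun _ => (1 : ℝ)) ω) •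
          (((μ (Y ⁻¹' {y})).toReal)⁻¹ • ∫ ω', Set.indicator (Y ⁻¹' {y}) X₁ ω' ∂μ) :=
  condexp_eq_linear_in_posterior_general (F := F) X₁ hX₁ X₂ hX₂ Y hY hindep
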